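/- There exists a symmetric singleton congestion game with non-decreasing (concave) delays in which a local optimum of social cost is not a global optimum: with 3 agents and two resources, d_1(1)=16, d_1(2)=32, d_1(3)=36, d_2(x)=45, the state with all three agents on resource 1 is a local optimum (no single-agent move decreases social cost) with cost 108, while the state with one agent on resource 1 and two on resource 2 has cost 106. -/
import Mathlib


open Finset

def scong (S : Fin 3 → Fin 2) (e : Fin 2) : ℕ :=
  (Finset.univ.filter (fun i => S i = e)).card

noncomputable def socialCost (d : Fin 2 → ℕ → ℝ) (S : Fin 3 → Fin 2) : ℝ :=
  ∑ e : Fin 2, (scong S e : ℝ) * d e (scong S e)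

/-- a symmetric singleton game with non-decreasing (concave)
delays where a local optimum of the social cost is not a global optimum:
3 agents, two resources, d₁(1)=16, d₁(2)=32, d₁(3)=36, d₂ ≡ 45.  All agents on
resource 1 is a local optimum of cost 108, while one agent on resource 1 and
two on resource 2 costs only 106. -/
theorem local_opt_not_global_concave (d : Fin 2 → ℕ → ℝ)
    (h11 : d 0 1 = 16) (h12 : d 0 2 = 32) (h13 : d 0 3 = 36)
    (h2 : ∀ k, d 1 k = 45) :
    -- the state with all agents on resource 1 is a local optimum …
    (∀ (i : Fin 3) (r : Fin 2),
        socialCost d (fun _ => 0) ≤ socialCost d (Function.update (fun _ => 0) i r)) ∧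
    socialCost d (fun _ => 0) = 108 ∧
    -- … but the state with congestions (1,2) is strictly cheaper
    socialCost d ![0, 1, 1] = 106 := by
  have base : socialCost d (fun _ => 0) = 108 := by
    have c0 : scong (fun _ => 0) 0 = 3 := by decide
    have c1 : scong (fun _ => 0) 1 = 0 := by decide
    simp [socialCost, Fin.sum_univ_two, c0, c1, h13]
    norm_num
  refine ⟨?_, base, ?_⟩
  · intro i r
    rw [base]
    fin_cases r
    · have hup0 : Function.update (fun _ => (0:Fin 2)) i 0 = fun _ => 0 := by
        funext j; by_cases h : j = i <;> simp [Function.update, h]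
      rw [show ((⟨0, by omega⟩ : Fin 2)) = 0 from rfl, hup0, base]
    · rw [show ((⟨1, by omega⟩ : Fin 2)) = 1 from rfl]
      have c0 : scong (Function.update (fun _ => (0:Fin 2)) i 1) 0 = 2 := by
        fin_cases i <;> decide
      have c1 : scong (Function.update (fun _ => (0:Fin 2)) i 1) 1 = 1 := by
        fin_cases i <;> decide
      simp only [socialCost, Fin.sum_univ_two, c0, c1, h12, h2]
      norm_num
  · have c0 : scong ![0,1,1] 0 = 1 := by decide
    have c1 : scong ![0,1,1] 1 = 2 := by decide
    simp [socialCost, Fin.sum_univ_two, c0, c1, h11, h2]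
    norm_num
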